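/- Let m ≥ 1, x_k = k/2^m, and y_k = φ₂(k) for k = 0,...,2^m−1. Then ∑_{k,l=0}^{2^m−1} |x_k − x_l|·|y_k − y_l| = (8(4^m − 1) + 9m² + 3m)/72. -/

import Mathlib

/-!
Write `T n = ∑_{k,l<n} |k - l| |φ₂ k - φ₂ l|`, so that the sum in question is `T (2^m) / 2^m`.
Splitting `k = 2a + i`, `l = 2b + j` by parity and using `φ₂ (2a + i) = (i + φ₂ a) / 2` gives

  `T (2n) = 2 T n + 2 ∑_{a,b<n} |a - b| + n + ∑_{a,b<n} sign (a - b) (φ₂ a - φ₂ b)`.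

The last sum is `2 ∑_{a<n} (2a + 1 - n) φ₂ a`, which for `n = 2^m` is expressed through the
moments `∑ φ₂ k = (2^m - 1)/2` and `∑ k φ₂ k = (2^m - 1)²/4 + m 2^m/8`, both obtained from the
same recursion; it equals `m 2^m / 2`. Induction on `m` then solves for `T (2^m)`.
-/

/-- The base-2 digit reversal (radical inverse) function. -/
noncomputable def phi2 (k : ℕ) : ℝ :=
  ∑ i ∈ Finset.range (k + 1), if Nat.testBit k i then (1 : ℝ) / 2 ^ (i + 1) else 0

open Finset

lemma phi2_eq_sum_range {k N : ℕ} (h : k < N) :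
    phi2 k = ∑ i ∈ range N, if k.testBit i then (1 : ℝ) / 2 ^ (i + 1) else 0 := by
  refine sum_subset (range_subset_range.2 h) fun i _ hi => ?_
  rw [mem_range, not_lt] at hi
  have hki : k < 2 ^ i := k.lt_two_pow_self.trans_le (Nat.pow_le_pow_right two_pos (by omega))
  simp [Nat.testBit_lt_two_pow hki]

lemma phi2_eq_testBit_zero_add_phi2_div_two (k : ℕ) :
    phi2 k = ((if k.testBit 0 then 1 else 0) + phi2 (k / 2)) / 2 := by
  rw [phi2_eq_sum_range (show k < k + 2 by omega), sum_range_succ',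
    phi2_eq_sum_range (show k / 2 < k + 1 by omega), add_div, sum_div, add_comm]
  congr 1
  · split_ifs <;> norm_num
  · refine sum_congr rfl fun i _ => ?_
    rw [Nat.testBit_succ]
    split_ifs <;> ring

lemma phi2_two_mul (a : ℕ) : phi2 (2 * a) = phi2 a / 2 := by
  rw [phi2_eq_testBit_zero_add_phi2_div_two]
  simp [Nat.testBit_zero]

lemma phi2_two_mul_add_one (a : ℕ) : phi2 (2 * a + 1) = (1 + phi2 a) / 2 := by
  rw [phi2_eq_testBit_zero_add_phi2_div_two]
  simp [Nat.testBit_zero, show (2 * a + 1) / 2 = a by omega]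

lemma phi2_mem_Ico (k : ℕ) : phi2 k ∈ Set.Ico 0 1 := by
  induction k using Nat.evenOddRec with
  | h0 => simp [phi2]
  | h_even a ih =>
    obtain ⟨h0, h1⟩ := ih
    rw [phi2_two_mul]
    constructor <;> linarith
  | h_odd a ih =>
    obtain ⟨h0, h1⟩ := ih
    rw [phi2_two_mul_add_one]
    constructor <;> linarith

lemma sum_range_two_mul {M : Type*} [AddCommMonoid M] (n : ℕ) (f : ℕ → M) :
    ∑ k ∈ range (2 * n), f k = ∑ a ∈ range n, (f (2 * a) + f (2 * a + 1)) := by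
  induction n with
  | zero => simp
  | succ n ih =>
    rw [mul_add_one, sum_range_succ, sum_range_succ, sum_range_succ, ih, add_assoc]

lemma sum_range_natCast (n : ℕ) : ∑ i ∈ range n, (i : ℝ) = n * (n - 1) / 2 := by
  induction n with
  | zero => simp
  | succ n ih =>
    rw [sum_range_succ, ih]
    push_cast
    ring

lemma sum_range_abs_natCast_sub_self (n : ℕ) :
    ∑ a ∈ range n, |(a : ℝ) - n| = n * (n + 1) / 2 := by
  have h : ∀ a ∈ range n, |(a : ℝ) - n| = n - a := fun a ha => by
    rw [abs_sub_comm, abs_of_nonneg (sub_nonneg.2 (by exact_mod_cast (mem_range.1 ha).le))]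
  rw [sum_congr rfl h, sum_sub_distrib, sum_const, card_range, nsmul_eq_mul, sum_range_natCast]
  ring

lemma sum_sum_abs_natCast_sub (n : ℕ) :
    ∑ a ∈ range n, ∑ b ∈ range n, |(a : ℝ) - b| = n * (n ^ 2 - 1) / 3 := by
  induction n with
  | zero => simp
  | succ n ih =>
    simp only [sum_range_succ, sum_add_distrib, ih, sum_range_abs_natCast_sub_self]
    simp_rw [abs_sub_comm (n : ℝ), sum_range_abs_natCast_sub_self, sub_self, abs_zero]
    push_cast
    ring

lemma sum_range_sign_natCast_sub {a n : ℕ} (h : a < n) :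
    ∑ b ∈ range n, (SignType.sign ((a : ℝ) - b) : ℝ) = 2 * a + 1 - n := by
  induction n with
  | zero => omega
  | succ n ih =>
    rw [sum_range_succ]
    rcases (Nat.lt_succ_iff.1 h).lt_or_eq with h | rfl
    · rw [ih h, sign_neg (by simpa using h), SignType.coe_neg_one]
      push_cast
      ring
    · have hpos : ∀ b ∈ range a, (SignType.sign ((a : ℝ) - b) : ℝ) = 1 := fun b hb => by
        rw [sign_pos (by simpa using hb)]
        rfl
      rw [sum_congr rfl hpos, sub_self, sign_zero]
      simp only [sum_const, card_range, nsmul_eq_mul, mul_one, SignType.coe_zero, add_zero]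
      push_cast
      ring

lemma sum_sum_sign_mul_sub (n : ℕ) (f : ℕ → ℝ) :
    ∑ a ∈ range n, ∑ b ∈ range n, (SignType.sign ((a : ℝ) - b) : ℝ) * (f a - f b)
      = 2 * ∑ a ∈ range n, (2 * a + 1 - n) * f a := by
  have hswap : ∑ a ∈ range n, ∑ b ∈ range n, (SignType.sign ((a : ℝ) - b) : ℝ) * f b
      = -∑ a ∈ range n, ∑ b ∈ range n, (SignType.sign ((a : ℝ) - b) : ℝ) * f a := by
    rw [sum_comm, ← sum_neg_distrib]
    refine sum_congr rfl fun a _ => ?_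
    rw [← sum_neg_distrib]
    refine sum_congr rfl fun b _ => ?_
    rw [← neg_sub, Left.sign_neg, SignType.coe_neg, neg_mul]
  simp only [mul_sub, sum_sub_distrib, hswap, sub_neg_eq_add, ← two_mul]
  congr 1
  refine sum_congr rfl fun a ha => ?_
  rw [← sum_mul, sum_range_sign_natCast_sub (mem_range.1 ha)]

lemma sum_range_two_pow_phi2 (m : ℕ) : ∑ k ∈ range (2 ^ m), phi2 k = (2 ^ m - 1) / 2 := by
  induction m with
  | zero => simp [phi2]
  | succ m ih =>
    simp only [pow_succ', sum_range_two_mul, phi2_two_mul, phi2_two_mul_add_one,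
      sum_add_distrib, ← sum_div, sum_const, card_range, nsmul_eq_mul, ih]
    push_cast
    ring

lemma sum_range_two_pow_mul_phi2 (m : ℕ) :
    ∑ k ∈ range (2 ^ m), (k : ℝ) * phi2 k = (2 ^ m - 1) ^ 2 / 4 + m * 2 ^ m / 8 := by
  induction m with
  | zero => simp [phi2]
  | succ m ih =>
    have hpair : ∀ a : ℕ,
        ((2 * a : ℕ) : ℝ) * phi2 (2 * a) + ((2 * a + 1 : ℕ) : ℝ) * phi2 (2 * a + 1)
          = 2 * (a * phi2 a) + a + phi2 a / 2 + 1 / 2 := fun a => by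
      rw [phi2_two_mul, phi2_two_mul_add_one]
      push_cast
      ring
    simp only [pow_succ', sum_range_two_mul, hpair, sum_add_distrib, ← mul_sum, ← sum_div, ih,
      sum_range_natCast, sum_range_two_pow_phi2, sum_const, card_range, nsmul_eq_mul]
    push_cast
    ring

lemma sum_sum_sign_mul_sub_phi2 (m : ℕ) :
    ∑ a ∈ range (2 ^ m), ∑ b ∈ range (2 ^ m),
      (SignType.sign ((a : ℝ) - b) : ℝ) * (phi2 a - phi2 b) = m * 2 ^ m / 2 := by
  simp only [sum_sum_sign_mul_sub, sub_mul, add_mul, mul_assoc, sum_sub_distrib, sum_add_distrib,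
    ← mul_sum, sum_range_two_pow_mul_phi2, sum_range_two_pow_phi2]
  push_cast
  ring

-- With `u = φ₂ a`, `v = φ₂ b`, the left side is the contribution of the four pairs of children
-- `(2a + i, 2b + j)`, since `φ₂ (2a + i) = (i + φ₂ a) / 2`.
lemma sum_abs_mul_abs_children (a b : ℕ) {u v : ℝ}
    (hu : u ∈ Set.Ico 0 1) (hv : v ∈ Set.Ico 0 1) :
    |2 * (a : ℝ) - 2 * b| * |u / 2 - v / 2|
        + |2 * (a : ℝ) - (2 * b + 1)| * |u / 2 - (1 + v) / 2|
      + (|2 * (a : ℝ) + 1 - 2 * b| * |(1 + u) / 2 - v / 2|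
        + |2 * (a : ℝ) + 1 - (2 * b + 1)| * |(1 + u) / 2 - (1 + v) / 2|)
      = 2 * (|(a : ℝ) - b| * |u - v|) + 2 * |(a : ℝ) - b| + (if a = b then 1 else 0)
        + (SignType.sign ((a : ℝ) - b) : ℝ) * (u - v) := by
  obtain ⟨hu0, hu1⟩ := hu
  obtain ⟨hv0, hv1⟩ := hv
  have hcross₁ : |u / 2 - (1 + v) / 2| = (1 - u + v) / 2 := by
    rw [abs_of_nonpos (by linarith)]; ring
  have hcross₂ : |(1 + u) / 2 - v / 2| = (1 + u - v) / 2 := by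
    rw [abs_of_nonneg (by linarith)]; ring
  have hsame₁ : |u / 2 - v / 2| = |u - v| / 2 := by
    rw [← sub_div, abs_div, abs_two]
  have hsame₂ : |(1 + u) / 2 - (1 + v) / 2| = |u - v| / 2 := by
    rw [← sub_div, add_sub_add_left_eq_sub, abs_div, abs_two]
  rw [hcross₁, hcross₂, hsame₁, hsame₂]
  rcases lt_trichotomy a b with h | rfl | h
  · have hab : (a : ℝ) + 1 ≤ b := by exact_mod_cast h
    rw [abs_of_neg (by linarith : 2 * (a : ℝ) - 2 * b < 0),
      abs_of_neg (by linarith : 2 * (a : ℝ) - (2 * b + 1) < 0),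
      abs_of_neg (by linarith : 2 * (a : ℝ) + 1 - 2 * b < 0),
      abs_of_neg (by linarith : 2 * (a : ℝ) + 1 - (2 * b + 1) < 0),
      abs_of_neg (by linarith : (a : ℝ) - b < 0), sign_neg (by linarith), if_neg h.ne,
      SignType.coe_neg_one]
    ring
  · rw [show 2 * (a : ℝ) - (2 * a + 1) = -1 by ring, show 2 * (a : ℝ) + 1 - 2 * a = 1 by ring]
    simp only [sub_self, abs_zero, abs_neg, abs_one, if_true, sign_zero, SignType.coe_zero]
    ring
  · have hba : (b : ℝ) + 1 ≤ a := by exact_mod_cast h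
    rw [abs_of_pos (by linarith : 0 < 2 * (a : ℝ) - 2 * b),
      abs_of_pos (by linarith : 0 < 2 * (a : ℝ) - (2 * b + 1)),
      abs_of_pos (by linarith : 0 < 2 * (a : ℝ) + 1 - 2 * b),
      abs_of_pos (by linarith : 0 < 2 * (a : ℝ) + 1 - (2 * b + 1)),
      abs_of_pos (by linarith : 0 < (a : ℝ) - b), sign_pos (by linarith), if_neg h.ne',
      SignType.coe_one]
    ring

noncomputable def hammersleySum (n : ℕ) : ℝ :=
  ∑ k ∈ range n, ∑ l ∈ range n, |(k : ℝ) - l| * |phi2 k - phi2 l|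

lemma hammersleySum_two_mul (n : ℕ) :
    hammersleySum (2 * n) = 2 * hammersleySum n
      + 2 * ∑ a ∈ range n, ∑ b ∈ range n, |(a : ℝ) - b| + n
      + ∑ a ∈ range n, ∑ b ∈ range n,
          (SignType.sign ((a : ℝ) - b) : ℝ) * (phi2 a - phi2 b) := by
  have hdiag : ∑ a ∈ range n, ∑ b ∈ range n, (if a = b then 1 else 0 : ℝ) = n := by
    rw [sum_congr rfl fun a ha => by rw [sum_ite_eq, if_pos ha]]
    simp
  rw [← hdiag]
  simp only [hammersleySum, sum_range_two_mul, ← sum_add_distrib, mul_sum]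
  refine sum_congr rfl fun a _ => sum_congr rfl fun b _ => ?_
  push_cast
  rw [phi2_two_mul, phi2_two_mul, phi2_two_mul_add_one, phi2_two_mul_add_one]
  exact sum_abs_mul_abs_children a b (phi2_mem_Ico a) (phi2_mem_Ico b)

lemma hammersleySum_two_pow (m : ℕ) :
    hammersleySum (2 ^ m) = 2 ^ m * (8 * 4 ^ m - 8 + 9 * m ^ 2 + 3 * m) / 72 := by
  induction m with
  | zero => simp [hammersleySum]
  | succ m ih =>
    have h4 : ∀ j : ℕ, (4 : ℝ) ^ j = 2 ^ j * 2 ^ j := fun j => by rw [← mul_pow]; norm_num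
    rw [pow_succ', hammersleySum_two_mul, ih, sum_sum_abs_natCast_sub,
      sum_sum_sign_mul_sub_phi2]
    push_cast
    simp only [h4]
    ring

theorem hammersley_S10_general (m : ℕ) :
    ∑ k ∈ Finset.range (2 ^ m), ∑ l ∈ Finset.range (2 ^ m),
      |(k : ℝ) / 2 ^ m - (l : ℝ) / 2 ^ m| * |phi2 k - phi2 l|
      = (8 * ((4:ℝ) ^ m - 1) + 9 * (m : ℝ) ^ 2 + 3 * (m : ℝ)) / 72 := by
  have h2m : (0 : ℝ) < 2 ^ m := by positivity
  have hscale : ∀ k l : ℕ, |(k : ℝ) / 2 ^ m - (l : ℝ) / 2 ^ m| * |phi2 k - phi2 l|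
      = |(k : ℝ) - l| * |phi2 k - phi2 l| / 2 ^ m := fun k l => by
    rw [← sub_div, abs_div, abs_of_pos h2m, div_mul_eq_mul_div]
  simp only [hscale, ← sum_div]
  rw [← hammersleySum, hammersleySum_two_pow]
  field_simp

theorem hammersley_S10 (m : ℕ) (hm : 1 ≤ m) :
    ∑ k ∈ Finset.range (2 ^ m), ∑ l ∈ Finset.range (2 ^ m),
      |(k : ℝ) / 2 ^ m - (l : ℝ) / 2 ^ m| * |phi2 k - phi2 l|
      = (8 * ((4:ℝ) ^ m - 1) + 9 * (m : ℝ) ^ 2 + 3 * (m : ℝ)) / 72 :=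
  hammersley_S10_general m
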